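/- Let σ = (√5 − 1)/2. Then σ⁷·(13 + 17σ + 15σ²) − 1 = σ¹¹ + σ¹³. -/

import Mathlib

/-! From σ² + σ = 1 every power of σ is linear in σ with Fibonacci coefficients,
`σ ^ (n + 1) = (-1) ^ (n + 1) * (F n - F (n + 1) * σ)`, and both sides reduce to `322 * σ - 199`. -/

noncomputable def σ : ℝ := (Real.sqrt 5 - 1) / 2

theorem σ_sq_add_σ : σ ^ 2 + σ = 1 := by
  have h5 : Real.sqrt 5 ^ 2 = 5 := Real.sq_sqrt (by norm_num)
  unfold σ
  linear_combination h5 / 4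

section GoldenRelation

variable {R : Type*} [CommRing R] {x : R}

theorem pow_succ_eq_fib_of_sq_add_self_eq_one (hx : x ^ 2 + x = 1) (n : ℕ) :
    x ^ (n + 1) = (-1) ^ (n + 1) * (Nat.fib n - Nat.fib (n + 1) * x) := by
  induction n with
  | zero => simp
  | succ n ih =>
    rw [pow_succ, ih, Nat.fib_add_two]
    push_cast
    linear_combination (-1) ^ n * Nat.fib (n + 1) * hx

theorem pow_seven_mul_sub_one_of_sq_add_self_eq_one (hx : x ^ 2 + x = 1) :
    x ^ 7 * (13 + 17 * x + 15 * x ^ 2) - 1 = x ^ 11 + x ^ 13 := by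
  have h7 := pow_succ_eq_fib_of_sq_add_self_eq_one hx 6
  have h8 := pow_succ_eq_fib_of_sq_add_self_eq_one hx 7
  have h9 := pow_succ_eq_fib_of_sq_add_self_eq_one hx 8
  have h11 := pow_succ_eq_fib_of_sq_add_self_eq_one hx 10
  have h13 := pow_succ_eq_fib_of_sq_add_self_eq_one hx 12
  norm_num at h7 h8 h9 h11 h13
  linear_combination 13 * h7 + 17 * h8 + 15 * h9 - h11 - h13

end GoldenRelation

theorem stmt_14 : σ ^ 7 * (13 + 17 * σ + 15 * σ ^ 2) - 1 = σ ^ 11 + σ ^ 13 :=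
  pow_seven_mul_sub_one_of_sq_add_self_eq_one σ_sq_add_σ
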